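/- arXiv:1706.04258 — 6 statements merged into one kernel-verified Lean document; each statement's English description precedes it below -/
import Mathlib

section
/- The function φ = 1/2 + (x³-3x²-9x+315)·y/(108(3x-5)²), defined on the elliptic curve y² = x³+6x²+180x-900, satisfies 4·φ·(1-φ) = -(x³+45x-450)³/(2916(3x-5)⁴) whenever 3x-5 ≠ 0. -/
/-! The correspondence `φ = 1/2 + √(1 - ψ₉)/2` makes `4φ(1 - φ) = 1 - (2φ - 1)² = ψ₉`. On the curve
`y² = x³+6x²+180x-900` the square root is rational: `1 - ψ₉ = (x³-3x²-9x+315)² y² / (2916(3x-5)⁴)`,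
by the polynomial identity `(x³+45x-450)³ + 2916(3x-5)⁴ = (x³-3x²-9x+315)²(x³+6x²+180x-900)`. -/

theorem four_mul_half_add_mul_one_sub_half_add {K : Type*} [Field K] (h2 : (2 : K) ≠ 0) (q : K) :
    4 * (1 / 2 + q) * (1 - (1 / 2 + q)) = 1 - (2 * q) ^ 2 := by
  field_simp
  ring

theorem cube_add_mul_pow_four_eq_sq_mul_cubic {R : Type*} [CommRing R] (x : R) :
    (x ^ 3 + 45 * x - 450) ^ 3 + 2916 * (3 * x - 5) ^ 4 =
      (x ^ 3 - 3 * x ^ 2 - 9 * x + 315) ^ 2 * (x ^ 3 + 6 * x ^ 2 + 180 * x - 900) := by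
  ring

theorem one_sub_psi9 {K : Type*} [Field K] [CharZero K] {x : K} (hx : 3 * x - 5 ≠ 0) :
    1 - -((x ^ 3 + 45 * x - 450) ^ 3 / (2916 * (3 * x - 5) ^ 4)) =
      (x ^ 3 - 3 * x ^ 2 - 9 * x + 315) ^ 2 * (x ^ 3 + 6 * x ^ 2 + 180 * x - 900) /
        (2916 * (3 * x - 5) ^ 4) := by
  have hden : (2916 : K) * (3 * x - 5) ^ 4 ≠ 0 := mul_ne_zero (by norm_num) (pow_ne_zero _ hx)
  rw [← cube_add_mul_pow_four_eq_sq_mul_cubic, add_div, div_self hden]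
  ring

/-- On the elliptic curve `y² = x³+6x²+180x-900`, the function
`φ = 1/2 + (x³-3x²-9x+315)·y/(108(3x-5)²)` satisfies
`4·φ·(1-φ) = -(x³+45x-450)³/(2916(3x-5)⁴)` whenever `3x-5 ≠ 0`. -/
theorem stmt_2 (x y : ℂ) (hE : y ^ 2 = x ^ 3 + 6 * x ^ 2 + 180 * x - 900)
    (hx : 3 * x - 5 ≠ 0) :
    (4 : ℂ) * (1 / 2 + (x ^ 3 - 3 * x ^ 2 - 9 * x + 315) * y / (108 * (3 * x - 5) ^ 2)) *
        (1 - (1 / 2 + (x ^ 3 - 3 * x ^ 2 - 9 * x + 315) * y / (108 * (3 * x - 5) ^ 2))) =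
      -((x ^ 3 + 45 * x - 450) ^ 3 / (2916 * (3 * x - 5) ^ 4)) := by
  have h_sq : (2 * ((x ^ 3 - 3 * x ^ 2 - 9 * x + 315) * y / (108 * (3 * x - 5) ^ 2))) ^ 2 =
      (x ^ 3 - 3 * x ^ 2 - 9 * x + 315) ^ 2 * y ^ 2 / (2916 * (3 * x - 5) ^ 4) := by
    field_simp
    ring
  rw [four_mul_half_add_mul_one_sub_half_add two_ne_zero, h_sq, hE, ← one_sub_psi9 hx]
  ring
end

section
/- The function φ = 1/2 + (x²-2x+6)·y/(2(x²-10)²) on the curve y² = x⁴+4x³-40x²-200x+500 satisfies 4·φ·(1-φ) = 64(4x-5)³/(x²-10)⁴ whenever x²-10 ≠ 0. -/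
/-!
This is the quadratic correspondence: if `w² = 1 - ψ` then `φ = (1 + w)/2` satisfies
`4φ(1 - φ) = 1 - w² = ψ`. For `ψ₈ = 64(4x-5)³/(x²-10)⁴` the numerator of `1 - ψ₈` factors as
`(x²-2x+6)²` times the quartic defining the curve, so `w = (x²-2x+6)·y/(x²-10)²` is a square
root of `1 - ψ₈` on the curve.
-/

theorem four_mul_half_add_half_mul_one_sub {K : Type*} [Field K] (h2 : (2 : K) ≠ 0) (w : K) :
    4 * (1 / 2 + w / 2) * (1 - (1 / 2 + w / 2)) = 1 - w ^ 2 := by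
  field_simp
  ring

theorem psi8_one_sub_numerator {R : Type*} [CommRing R] (x : R) :
    (x ^ 2 - 10) ^ 4 - 64 * (4 * x - 5) ^ 3 =
      (x ^ 2 - 2 * x + 6) ^ 2 * (x ^ 4 + 4 * x ^ 3 - 40 * x ^ 2 - 200 * x + 500) := by
  ring

/-- On the genus 1 curve `y² = x⁴+4x³-40x²-200x+500`, the function
`φ = 1/2 + (x²-2x+6)·y/(2(x²-10)²)` satisfies
`4·φ·(1-φ) = 64(4x-5)³/(x²-10)⁴` whenever `x²-10 ≠ 0`. -/
theorem stmt_5 (x y : ℂ)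
    (hE : y ^ 2 = x ^ 4 + 4 * x ^ 3 - 40 * x ^ 2 - 200 * x + 500)
    (hx : x ^ 2 - 10 ≠ 0) :
    (4 : ℂ) * (1 / 2 + (x ^ 2 - 2 * x + 6) * y / (2 * (x ^ 2 - 10) ^ 2)) *
        (1 - (1 / 2 + (x ^ 2 - 2 * x + 6) * y / (2 * (x ^ 2 - 10) ^ 2))) =
      64 * (4 * x - 5) ^ 3 / (x ^ 2 - 10) ^ 4 := by
  set w := (x ^ 2 - 2 * x + 6) * y / (x ^ 2 - 10) ^ 2
  have hw : (x ^ 2 - 2 * x + 6) * y / (2 * (x ^ 2 - 10) ^ 2) = w / 2 :=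
    div_mul_eq_div_div_swap _ _ _
  have hw_sq : w ^ 2 = 1 - 64 * (4 * x - 5) ^ 3 / (x ^ 2 - 10) ^ 4 := by
    rw [div_pow, mul_pow, hE, ← psi8_one_sub_numerator]
    field_simp
  rw [hw, four_mul_half_add_half_mul_one_sub two_ne_zero, hw_sq, sub_sub_cancel]
end

section
/- For w with w² = s(s+8)(4s+5) and s(4s+5)(s+2) ≠ 0, the functions q = 1/2 + s(2s³+6s²-63s-350)/(30w(s+2)) and t = 1/2 + (s+8)(2s⁴-8s³-42s²-170s-25)/(54w(4s+5)) satisfy 4t(1-t) = -4(s-1)⁵(s+5)³(s-10)/(729·s·(4s+5)³). -/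
/-! The identity says `1 - r₁₃ = (2t - 1)²`. Since `2t - 1 = (s+8)·Q/(27w(4s+5))` with
`Q = 2s⁴-8s³-42s²-170s-25`, squaring and substituting `w² = s(s+8)(4s+5)` reduces it to the
polynomial identity `(s+8)·Q² = 729s(4s+5)³ + 4(s-1)⁵(s+5)³(s-10)`. -/

theorem painleve13_polynomial_identity {R : Type*} [CommRing R] (s : R) :
    (s + 8) * (2 * s ^ 4 - 8 * s ^ 3 - 42 * s ^ 2 - 170 * s - 25) ^ 2 =
      729 * s * (4 * s + 5) ^ 3 + 4 * (s - 1) ^ 5 * (s + 5) ^ 3 * (s - 10) := by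
  ring

/-- Also true for `c = 0`; with `c = s + 8` this covers the branch point `s = -8`, where `w = 0`. -/
theorem sq_mul_div_mul_self {K : Type*} [Field K] (c x y : K) :
    c ^ 2 * x / (c * y) = c * x / y := by
  rcases eq_or_ne c 0 with rfl | hc
  · simp
  · rw [sq, mul_assoc, mul_div_mul_left _ _ hc]

theorem stmt_13_general (s w t : ℂ)
    (hw : w ^ 2 = s * (s + 8) * (4 * s + 5))
    (hs : s * (4 * s + 5) * (s + 2) ≠ 0)
    (ht : t = 1 / 2 +
      (s + 8) * (2 * s ^ 4 - 8 * s ^ 3 - 42 * s ^ 2 - 170 * s - 25) / (54 * w * (4 * s + 5))) :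
    4 * t * (1 - t) =
      -(4 * (s - 1) ^ 5 * (s + 5) ^ 3 * (s - 10)) / (729 * s * (4 * s + 5) ^ 3) := by
  set Q := 2 * s ^ 4 - 8 * s ^ 3 - 42 * s ^ 2 - 170 * s - 25
  have hden : 729 * s * (4 * s + 5) ^ 3 ≠ 0 := by
    obtain ⟨⟨hs0, hs5⟩, -⟩ : (s ≠ 0 ∧ 4 * s + 5 ≠ 0) ∧ s + 2 ≠ 0 := by simpa [not_or] using hs
    simp [hs0, hs5]
  have h2t : 2 * t - 1 = (s + 8) * Q / (27 * w * (4 * s + 5)) := by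
    rw [ht, show (54 : ℂ) * w * (4 * s + 5) = 2 * (27 * w * (4 * s + 5)) by ring, ← div_div]
    ring
  have hsq : (2 * t - 1) ^ 2 = (s + 8) * Q ^ 2 / (729 * s * (4 * s + 5) ^ 3) := by
    calc (2 * t - 1) ^ 2 = (s + 8) ^ 2 * Q ^ 2 / (729 * w ^ 2 * (4 * s + 5) ^ 2) := by
          rw [h2t, div_pow]; congr 1 <;> ring
      _ = (s + 8) ^ 2 * Q ^ 2 / ((s + 8) * (729 * s * (4 * s + 5) ^ 3)) := by
          rw [hw]; ring
      _ = (s + 8) * Q ^ 2 / (729 * s * (4 * s + 5) ^ 3) := by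
          rw [mul_assoc, sq_mul_div_mul_self]
  calc 4 * t * (1 - t) = 1 - (2 * t - 1) ^ 2 := by ring
    _ = _ := by
      rw [hsq, painleve13_polynomial_identity, eq_div_iff hden, sub_mul, div_mul_cancel₀ _ hden]
      ring

/-- On the elliptic curve `w² = s(s+8)(4s+5)` with `s(4s+5)(s+2) ≠ 0`, the functions
`q = 1/2 + s(2s³+6s²-63s-350)/(30w(s+2))` and
`t = 1/2 + (s+8)(2s⁴-8s³-42s²-170s-25)/(54w(4s+5))`
satisfy `4t(1-t) = -4(s-1)⁵(s+5)³(s-10)/(729·s·(4s+5)³)`. -/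
theorem stmt_13 (s w q t : ℂ)
    (hw : w ^ 2 = s * (s + 8) * (4 * s + 5))
    (hs : s * (4 * s + 5) * (s + 2) ≠ 0)
    (hq : q = 1 / 2 + s * (2 * s ^ 3 + 6 * s ^ 2 - 63 * s - 350) / (30 * w * (s + 2)))
    (ht : t = 1 / 2 +
      (s + 8) * (2 * s ^ 4 - 8 * s ^ 3 - 42 * s ^ 2 - 170 * s - 25) / (54 * w * (4 * s + 5))) :
    4 * t * (1 - t) =
      -(4 * (s - 1) ^ 5 * (s + 5) ^ 3 * (s - 10)) / (729 * s * (4 * s + 5) ^ 3) :=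
  stmt_13_general s w t hw hs ht
end

section
/- The j-invariant of the elliptic curve defined by w² = (s-1)(s+5)(s+8)(s-10) over ℚ equals 2·42³/5² = 148176/25. -/
open Polynomial

/-- The quartic `(s-1)(s+5)(s+8)(s-10) = s⁴ + 2s³ - 93s² - 310s + 400`. -/
noncomputable def q16 : ℚ[X] := (X - 1) * (X + 5) * (X + 8) * (X - 10)

/-- The classical invariant `I = 12ae - 3bd + c²` of the binary quartic
`as⁴+bs³+cs²+ds+e` given by `q16` (with `a=1, b=2, c=-93, d=-310, e=400`). -/
def I16 : ℚ := 12 * 1 * 400 - 3 * 2 * (-310) + (-93) ^ 2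

/-- The classical invariant `J = 72ace + 9bcd - 27ad² - 27eb² - 2c³` of the same quartic. -/
def J16 : ℚ := 72 * 1 * (-93) * 400 + 9 * 2 * (-93) * (-310) - 27 * 1 * (-310) ^ 2 -
  27 * 400 * 2 ^ 2 - 2 * (-93) ^ 3

/-- The Jacobian of the genus 1 curve `w² = (s-1)(s+5)(s+8)(s-10)`,
as the elliptic curve `y² = x³ - 27I·x - 27J` built from the classical invariants
of the binary quartic. -/
noncomputable def E16 : WeierstrassCurve ℚ := ⟨0, 0, 0, -27 * I16, -27 * J16⟩

/-- The j-invariant of the elliptic curve defined by `w² = (s-1)(s+5)(s+8)(s-10)`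
equals `2·42³/5² = 148176/25`. -/
theorem stmt_16 [E16.IsElliptic] : E16.j = 148176 / 25 := by
  rw [WeierstrassCurve.j, WeierstrassCurve.Δ', Units.val_inv_eq_inv_val, IsUnit.unit_spec]
  rw [show E16.Δ = 2^8 * 3^30 * 5^2 by
    simp [E16, WeierstrassCurve.Δ, WeierstrassCurve.b₂, WeierstrassCurve.b₄,
      WeierstrassCurve.b₆, WeierstrassCurve.b₈, I16, J16]; norm_num]
  simp [E16, WeierstrassCurve.c₄, WeierstrassCurve.b₂, WeierstrassCurve.b₄, I16]
  norm_num
end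

section
/- The quintic polynomial λ⁵ + 3λ⁴ + 4λ³ - 10λ² + 26λ - 54 is irreducible over ℚ and has exactly one real root. -/
/-!
Modulo 41 the quintic has no root and no monic quadratic factor `X² + bX + c`; the latter is
checked through the remainder of the division by `X² + bX + c`, which is an explicit pair of
polynomials in `b, c`. Being monic of degree 5, it is therefore irreducible over `𝔽₄₁`, hence
over `ℤ`, hence over `ℚ` by Gauss's lemma. Over `ℝ` its derivative is a positive definite
quartic, so it is strictly increasing, and it changes sign on `[1, 2]`.
-/

open Polynomial

section Quintic

variable (R : Type*) [CommRing R]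

noncomputable def quintic : R[X] := X ^ 5 + 3 * X ^ 4 + 4 * X ^ 3 - 10 * X ^ 2 + 26 * X - 54

theorem quintic_monic : (quintic R).Monic := by
  unfold quintic; monicity!

theorem natDegree_quintic [Nontrivial R] : (quintic R).natDegree = 5 := by
  unfold quintic; compute_degree!

theorem map_quintic {S : Type*} [CommRing S] (f : R →+* S) : (quintic R).map f = quintic S := by
  simp [quintic]

variable {R}

theorem eval_quintic (a : R) :
    (quintic R).eval a = a ^ 5 + 3 * a ^ 4 + 4 * a ^ 3 - 10 * a ^ 2 + 26 * a - 54 := by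
  simp [quintic]

/-- The coefficients `(r₁, r₀)` of the remainder `r₁ X + r₀` of `quintic R` modulo
`X² + bX + c`; `X³ + dX² + eX + k` is the quotient. -/
def quinticRemainder (b c : R) : R × R :=
  let d := 3 - b
  let e := 4 - c - b * d
  let k := -10 - c * d - b * e
  (26 - c * e - b * k, -54 - c * k)

theorem dvd_quintic_sub_quinticRemainder (b c : R) :
    X ^ 2 + C b * X + C c ∣
      quintic R - (C (quinticRemainder b c).1 * X + C (quinticRemainder b c).2) := by
  let d := 3 - b
  let e := 4 - c - b * d
  let k := -10 - c * d - b * e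
  refine ⟨X ^ 3 + C d * X ^ 2 + C e * X + C k, ?_⟩
  simp only [quintic, quinticRemainder, d, e, k, map_sub, map_mul, map_neg, map_ofNat]
  ring

theorem quinticRemainder_eq_zero_of_dvd [IsDomain R] {b c : R}
    (h : X ^ 2 + C b * X + C c ∣ quintic R) : quinticRemainder b c = 0 := by
  have hdvd : X ^ 2 + C b * X + C c ∣
      C (quinticRemainder b c).1 * X + C (quinticRemainder b c).2 := by
    simpa using dvd_sub h (dvd_quintic_sub_quinticRemainder b c)
  generalize quinticRemainder b c = r at hdvd ⊢
  obtain ⟨r₁, r₀⟩ := r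
  have hdeg : (C r₁ * X + C r₀).natDegree < (X ^ 2 + C b * X + C c).natDegree := by
    rw [show (X ^ 2 + C b * X + C c : R[X]).natDegree = 2 by compute_degree!]
    exact natDegree_linear_le.trans_lt one_lt_two
  have hzero := eq_zero_of_dvd_of_natDegree_lt hdvd hdeg
  have h₀ := congrArg (coeff · 0) hzero
  have h₁ := congrArg (coeff · 1) hzero
  simp only [coeff_add, mul_coeff_zero, coeff_C_zero, coeff_X_zero, mul_zero, zero_add,
    coeff_zero, coeff_mul_X, coeff_C_succ, add_zero] at h₀ h₁
  exact Prod.ext h₁ h₀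

end Quintic

theorem Polynomial.Monic.eq_X_sq_add {R : Type*} [CommRing R] {q : R[X]} (hq : q.Monic)
    (h2 : q.natDegree = 2) : q = X ^ 2 + C (q.coeff 1) * X + C (q.coeff 0) := by
  conv_lhs => rw [hq.as_sum, h2]
  simp only [Finset.sum_range_succ, Finset.range_one, Finset.sum_singleton, pow_zero, mul_one,
    pow_one]
  ring

instance fact_prime_41 : Fact (Nat.Prime 41) := ⟨by norm_num⟩

theorem quintic_zmod41_ne_zero :
    ∀ a : ZMod 41, a ^ 5 + 3 * a ^ 4 + 4 * a ^ 3 - 10 * a ^ 2 + 26 * a - 54 ≠ 0 := by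
  decide

theorem quinticRemainder_zmod41_ne_zero : ∀ b c : ZMod 41, quinticRemainder b c ≠ 0 := by
  decide

theorem irreducible_quintic_zmod41 : Irreducible (quintic (ZMod 41)) := by
  have hne_one : quintic (ZMod 41) ≠ 1 := fun h => by
    simpa [h] using natDegree_quintic (ZMod 41)
  refine ((quintic_monic _).irreducible_iff_lt_natDegree_lt hne_one).mpr fun q hq hdeg hdvd => ?_
  rw [natDegree_quintic, Finset.mem_Ioc] at hdeg
  obtain hlin | hquad : q.natDegree = 1 ∨ q.natDegree = 2 := by omega
  · rw [hq.eq_X_add_C hlin, ← sub_neg_eq_add, ← map_neg, dvd_iff_isRoot, IsRoot,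
      eval_quintic] at hdvd
    exact quintic_zmod41_ne_zero _ hdvd
  · rw [hq.eq_X_sq_add hquad] at hdvd
    exact quinticRemainder_zmod41_ne_zero _ _ (quinticRemainder_eq_zero_of_dvd hdvd)

theorem irreducible_quintic_int : Irreducible (quintic ℤ) :=
  (quintic_monic ℤ).irreducible_of_irreducible_map (Int.castRingHom (ZMod 41)) _
    (by rw [map_quintic]; exact irreducible_quintic_zmod41)

theorem irreducible_quintic_rat : Irreducible (quintic ℚ) := by
  rw [← map_quintic ℤ (Int.castRingHom ℚ)]
  exact (IsPrimitive.Int.irreducible_iff_irreducible_map_cast (quintic_monic ℤ).isPrimitive).mp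
    irreducible_quintic_int

-- `30 · (5x⁴ + 12x³ + 12x² - 20x + 26) = 6 (5x² + 6x)² + (12x - 25)² + 155`
theorem quintic_deriv_pos (x : ℝ) : 0 < 5 * x ^ 4 + 12 * x ^ 3 + 12 * x ^ 2 - 20 * x + 26 := by
  nlinarith [sq_nonneg (5 * x ^ 2 + 6 * x), sq_nonneg (12 * x - 25)]

theorem strictMono_eval_quintic : StrictMono fun x : ℝ => (quintic ℝ).eval x := by
  refine strictMono_of_deriv_pos fun x => ?_
  have hderiv : (derivative (quintic ℝ)).eval x =
      5 * x ^ 4 + 12 * x ^ 3 + 12 * x ^ 2 - 20 * x + 26 := by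
    simp only [quintic, derivative_sub, derivative_X_pow_succ, Nat.cast_ofNat,
      map_add, map_one, derivative_mul, derivative_ofNat, zero_mul, zero_add, Nat.cast_one,
      pow_one, derivative_X, mul_one, sub_zero, eval_add, eval_sub, eval_mul, eval_C, eval_one,
      eval_pow, eval_X, eval_ofNat]
    ring
  rw [Polynomial.deriv, hderiv]
  exact quintic_deriv_pos x

theorem existsUnique_quintic_root : ∃! x : ℝ, (quintic ℝ).eval x = 0 := by
  obtain ⟨x, -, hx⟩ := intermediate_value_Icc (by norm_num : (1 : ℝ) ≤ 2)
    (quintic ℝ).continuous.continuousOn (show (0 : ℝ) ∈ Set.Icc _ _ by norm_num [eval_quintic])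
  exact ⟨x, hx, fun y hy => strictMono_eval_quintic.injective (hy.trans hx.symm)⟩

/-- The quintic `λ⁵ + 3λ⁴ + 4λ³ - 10λ² + 26λ - 54` is irreducible over `ℚ`
and has exactly one real root. -/
theorem stmt_18 :
    Irreducible ((X : ℚ[X]) ^ 5 + 3 * X ^ 4 + 4 * X ^ 3 - 10 * X ^ 2 + 26 * X - 54) ∧
      ∃! x : ℝ, x ^ 5 + 3 * x ^ 4 + 4 * x ^ 3 - 10 * x ^ 2 + 26 * x - 54 = 0 := by
  refine ⟨irreducible_quintic_rat, ?_⟩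
  simpa only [eval_quintic] using existsUnique_quintic_root
end

section
/- The sextic polynomial η⁶ - 2η⁵ - 4η⁴ + 12η³ - 14η² + 8η - 4 is irreducible over ℚ and has exactly two real roots. -/
/-!
Modulo 29 the sextic has no monic factor of degree 1, 2 or 3: dividing by a generic monic factor
of that degree gives a remainder whose coefficients are explicit polynomials in the factor's
coefficients, and these never vanish simultaneously on `ZMod 29`. Being monic, the integer sextic
is then irreducible over `ℤ`, hence over `ℚ` by Gauss's lemma.

Over `ℝ` the sextic is negative on `[-2, 2]`, and outside this interval it is strictly monotone,
because the Taylor expansions of its derivative at `±2` have coefficients of a single sign. So it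
has exactly one real root on each side of the interval.
-/

open Polynomial Set

namespace Polynomial

variable {R : Type*} [CommRing R] {f g q r : R[X]}

lemma Monic.dvd_iff_eq_zero_of_eq_mul_add (hg : g.Monic) (h : f = g * q + r)
    (hr : r.degree < g.degree) : g ∣ f ↔ r = 0 := by
  rw [← modByMonic_eq_zero_iff_dvd hg, (div_modByMonic_unique q r hg ⟨by rw [h]; ring, hr⟩).2]

lemma Monic.eq_X_sq_add_s19 (hg : g.Monic) (hd : g.natDegree = 2) :
    g = X ^ 2 + C (g.coeff 1) * X + C (g.coeff 0) := by
  conv_lhs => rw [hg.as_sum, hd]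
  simp only [Finset.sum_range_succ, Finset.range_one, Finset.sum_singleton, pow_zero, mul_one,
    pow_one]
  ring

lemma Monic.eq_X_pow_three_add (hg : g.Monic) (hd : g.natDegree = 3) :
    g = X ^ 3 + C (g.coeff 2) * X ^ 2 + C (g.coeff 1) * X + C (g.coeff 0) := by
  conv_lhs => rw [hg.as_sum, hd]
  simp only [Finset.sum_range_succ, Finset.range_one, Finset.sum_singleton, pow_zero, mul_one,
    pow_one]
  ring

lemma C_mul_X_add_C_eq_zero_iff {a b : R} : C a * X + C b = 0 ↔ a = 0 ∧ b = 0 := by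
  refine ⟨fun h => ⟨by simpa using congr_arg (coeff · 1) h,
    by simpa using congr_arg (coeff · 0) h⟩, ?_⟩
  rintro ⟨rfl, rfl⟩
  simp

lemma C_mul_X_sq_add_C_mul_X_add_C_eq_zero_iff {a b c : R} :
    C a * X ^ 2 + C b * X + C c = 0 ↔ a = 0 ∧ b = 0 ∧ c = 0 := by
  refine ⟨fun h => ⟨by simpa using congr_arg (coeff · 2) h,
    by simpa using congr_arg (coeff · 1) h, by simpa using congr_arg (coeff · 0) h⟩, ?_⟩
  rintro ⟨rfl, rfl, rfl⟩
  simp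

end Polynomial

lemma ncard_setOf_eq_zero_eq_two {F : ℝ → ℝ} {a b u v : ℝ} (hF : Continuous F)
    (hanti : StrictAntiOn F (Iic a)) (hmono : StrictMonoOn F (Ici b))
    (hneg : ∀ x ∈ Icc a b, F x < 0) (hab : a ≤ b) (hu : u ≤ a) (hFu : 0 < F u)
    (hv : b ≤ v) (hFv : 0 < F v) : {x | F x = 0}.ncard = 2 := by
  have hFa := hneg a ⟨le_rfl, hab⟩
  have hFb := hneg b ⟨hab, le_rfl⟩
  obtain ⟨r, ⟨-, hra⟩, hr⟩ :=
    intermediate_value_Icc' hu hF.continuousOn ⟨hFa.le, hFu.le⟩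
  obtain ⟨s, ⟨hbs, -⟩, hs⟩ := intermediate_value_Icc hv hF.continuousOn ⟨hFb.le, hFv.le⟩
  have hzeros : {x | F x = 0} = {r, s} := by
    ext x
    simp only [mem_ofPred_eq, mem_insert_iff, mem_singleton_iff]
    refine ⟨fun hx => ?_, by rintro (rfl | rfl) <;> assumption⟩
    rcases le_or_gt x a with hxa | hax
    · exact .inl (hanti.injOn hxa hra (hx.trans hr.symm))
    rcases le_or_gt b x with hbx | hxb
    · exact .inr (hmono.injOn hbx hbs (hx.trans hs.symm))
    · exact absurd hx (hneg x ⟨hax.le, hxb.le⟩).ne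
  have hrs : r ≠ s := by
    rintro rfl
    exact hFa.ne (le_antisymm hra (hab.trans hbs) ▸ hr)
  rw [hzeros, ncard_pair hrs]

noncomputable def sextic (R : Type*) [CommRing R] : R[X] :=
  X ^ 6 - 2 * X ^ 5 - 4 * X ^ 4 + 12 * X ^ 3 - 14 * X ^ 2 + 8 * X - 4

section CommRing

variable {R : Type*} [CommRing R]

lemma eval_sextic (x : R) :
    (sextic R).eval x = x ^ 6 - 2 * x ^ 5 - 4 * x ^ 4 + 12 * x ^ 3 - 14 * x ^ 2 + 8 * x - 4 := by
  simp [sextic]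

lemma eval_derivative_sextic (x : R) : (derivative (sextic R)).eval x =
    6 * x ^ 5 - 10 * x ^ 4 - 16 * x ^ 3 + 36 * x ^ 2 - 28 * x + 8 := by
  simp only [sextic, derivative_sub, derivative_X_pow_succ, Nat.cast_ofNat,
    map_add, map_one, derivative_mul, derivative_ofNat, zero_mul, zero_add, Nat.cast_one, pow_one,
    derivative_X, mul_one, sub_zero, eval_add, eval_sub, eval_mul, eval_C, eval_one, eval_pow,
    eval_X, eval_ofNat]
  ring

lemma map_sextic {S : Type*} [CommRing S] (f : R →+* S) : (sextic R).map f = sextic S := by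
  simp [sextic]

lemma X_add_C_dvd_sextic_iff (a : R) : X + C a ∣ sextic R ↔
    a ^ 6 + 2 * a ^ 5 - 4 * a ^ 4 - 12 * a ^ 3 - 14 * a ^ 2 - 8 * a - 4 = 0 := by
  rw [← sub_neg_eq_add, ← map_neg, dvd_iff_isRoot, IsRoot, eval_sextic]
  ring_nf

lemma monic_sextic : (sextic R).Monic := by
  nontriviality R
  unfold sextic; monicity!

variable [Nontrivial R]

lemma natDegree_sextic : (sextic R).natDegree = 6 := by
  unfold sextic; compute_degree!

lemma X_sq_add_dvd_sextic_iff (a b : R) : X ^ 2 + C a * X + C b ∣ sextic R ↔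
    -a^5 - 2*a^4 + 4*a^3*b + 4*a^3 + 6*a^2*b + 12*a^2 - 3*a*b^2 - 8*a*b + 14*a - 2*b^2 - 12*b
      + 8 = 0 ∧
    -(a^4*b) - 2*a^3*b + 3*a^2*b^2 + 4*a^2*b + 4*a*b^2 + 12*a*b - b^3 - 4*b^2 + 14*b - 4 = 0 := by
  have hmonic : (X ^ 2 + C a * X + C b).Monic := by monicity!
  have hdeg : (X ^ 2 + C a * X + C b).degree = 2 := by compute_degree!
  rw [← C_mul_X_add_C_eq_zero_iff]
  refine hmonic.dvd_iff_eq_zero_of_eq_mul_add (q := X^4 + C (-a-2)*X^3 + C (a^2+2*a-b-4)*X^2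
      + C (-a^3-2*a^2+2*a*b+4*a+2*b+12)*X + C (a^4+2*a^3-3*a^2*b-4*a^2-4*a*b-12*a+b^2+4*b-14)) ?_
    (hdeg ▸ degree_linear_lt)
  simp only [sextic, map_add, map_mul, map_sub, map_neg, map_pow, map_ofNat]
  ring

lemma X_pow_three_add_dvd_sextic_iff (a b c : R) :
    X ^ 3 + C a * X ^ 2 + C b * X + C c ∣ sextic R ↔
    a^4 + 2*a^3 - 3*a^2*b - 4*a^2 - 4*a*b + 2*a*c - 12*a + b^2 + 4*b + 2*c - 14 = 0 ∧
    a^3*b + 2*a^2*b - a^2*c - 2*a*b^2 - 4*a*b - 2*a*c - 2*b^2 + 2*b*c - 12*b + 4*c + 8 = 0 ∧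
    a^3*c + 2*a^2*c - 2*a*b*c - 4*a*c - 2*b*c + c^2 - 12*c - 4 = 0 := by
  have hmonic : (X ^ 3 + C a * X ^ 2 + C b * X + C c).Monic := by monicity!
  have hdeg : (X ^ 3 + C a * X ^ 2 + C b * X + C c).degree = 3 := by compute_degree!
  rw [← C_mul_X_sq_add_C_mul_X_add_C_eq_zero_iff]
  refine hmonic.dvd_iff_eq_zero_of_eq_mul_add (q := X^3 + C (-a-2)*X^2 + C (a^2+2*a-b-4)*X
      + C (-a^3-2*a^2+2*a*b+4*a+2*b-c+12)) ?_ (hdeg ▸ degree_quadratic_lt)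
  simp only [sextic, map_add, map_mul, map_sub, map_neg, map_pow, map_ofNat]
  ring

end CommRing

instance fact_prime_twentyNine : Fact (Nat.Prime 29) := ⟨by norm_num⟩

-- 29 is the smallest prime modulo which the sextic stays irreducible.
set_option maxHeartbeats 4000000 in
lemma irreducible_sextic_zmod : Irreducible (sextic (ZMod 29)) := by
  refine (monic_sextic.irreducible_iff_lt_natDegree_lt ?_).2 fun g hg hdeg => ?_
  · exact ne_of_apply_ne natDegree (by simp [natDegree_sextic])
  rw [natDegree_sextic, Finset.mem_Ioc] at hdeg
  obtain hd | hd | hd : g.natDegree = 1 ∨ g.natDegree = 2 ∨ g.natDegree = 3 := by omega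
  · rw [hg.eq_X_add_C hd, X_add_C_dvd_sextic_iff]
    generalize g.coeff 0 = a
    revert a; decide
  · rw [hg.eq_X_sq_add_s19 hd, X_sq_add_dvd_sextic_iff]
    generalize g.coeff 1 = a, g.coeff 0 = b
    revert a b; decide
  · rw [hg.eq_X_pow_three_add hd, X_pow_three_add_dvd_sextic_iff]
    generalize g.coeff 2 = a, g.coeff 1 = b, g.coeff 0 = c
    revert a b c; decide

lemma irreducible_sextic_rat : Irreducible (sextic ℚ) := by
  have hZ : Irreducible (sextic ℤ) := monic_sextic.irreducible_of_irreducible_map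
    (Int.castRingHom (ZMod 29)) _ (by rw [map_sextic]; exact irreducible_sextic_zmod)
  rw [← map_sextic (Int.castRingHom ℚ)]
  exact (IsPrimitive.Int.irreducible_iff_irreducible_map_cast monic_sextic.isPrimitive).mp hZ

lemma strictMonoOn_eval_sextic : StrictMonoOn (sextic ℝ).eval (Ici 2) := by
  refine strictMonoOn_of_deriv_pos (convex_Ici 2) (sextic ℝ).continuousOn fun x hx => ?_
  rw [interior_Ici, mem_Ioi] at hx
  obtain ⟨t, ht, rfl⟩ : ∃ t > 0, x = 2 + t := ⟨x - 2, by linarith, by ring⟩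
  have htaylor : (derivative (sextic ℝ)).eval (2 + t) =
      6 * t ^ 5 + 50 * t ^ 4 + 144 * t ^ 3 + 180 * t ^ 2 + 84 * t := by
    rw [eval_derivative_sextic]; ring
  rw [Polynomial.deriv, htaylor]
  positivity

lemma strictAntiOn_eval_sextic : StrictAntiOn (sextic ℝ).eval (Iic (-2)) := by
  refine strictAntiOn_of_deriv_neg (convex_Iic (-2)) (sextic ℝ).continuousOn fun x hx => ?_
  rw [interior_Iic, mem_Iio] at hx
  obtain ⟨t, ht, rfl⟩ : ∃ t > 0, x = -2 - t := ⟨-2 - x, by linarith, by ring⟩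
  have htaylor : (derivative (sextic ℝ)).eval (-2 - t) =
      -(6 * t ^ 5 + 70 * t ^ 4 + 304 * t ^ 3 + 588 * t ^ 2 + 436 * t + 16) := by
    rw [eval_derivative_sextic]; ring
  rw [Polynomial.deriv, htaylor, neg_lt_zero]
  positivity

lemma eval_sextic_neg_of_mem_Icc {x : ℝ} (hx : x ∈ Icc (-2) 2) : (sextic ℝ).eval x < 0 := by
  obtain ⟨h1, h2⟩ := hx
  have hw : 0 ≤ (x + 2) * (2 - x) := mul_nonneg (by linarith) (by linarith)
  rw [eval_sextic]
  nlinarith [sq_nonneg (x^2 - x), sq_nonneg (x^2 + x - 2), sq_nonneg (x - 1), sq_nonneg x,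
    mul_nonneg hw (sq_nonneg x), mul_nonneg hw (sq_nonneg (x - 1)),
    mul_nonneg hw (sq_nonneg (x^2 - x)), sq_nonneg (x^3 - x^2 - 2*x + 2)]

lemma ncard_roots_sextic_real : {x : ℝ | (sextic ℝ).eval x = 0}.ncard = 2 :=
  ncard_setOf_eq_zero_eq_two (sextic ℝ).continuous strictAntiOn_eval_sextic
    strictMonoOn_eval_sextic (fun _ => eval_sextic_neg_of_mem_Icc) (by norm_num)
    (u := -3) (by norm_num) (by norm_num [eval_sextic])
    (v := 3) (by norm_num) (by norm_num [eval_sextic])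

/-- The sextic `η⁶ - 2η⁵ - 4η⁴ + 12η³ - 14η² + 8η - 4` is irreducible over `ℚ`
and has exactly two real roots. -/
theorem stmt_19 :
    Irreducible ((X : ℚ[X]) ^ 6 - 2 * X ^ 5 - 4 * X ^ 4 + 12 * X ^ 3 - 14 * X ^ 2 + 8 * X - 4) ∧
      {x : ℝ | x ^ 6 - 2 * x ^ 5 - 4 * x ^ 4 + 12 * x ^ 3 - 14 * x ^ 2 + 8 * x - 4 = 0}.ncard
        = 2 := by
  refine ⟨irreducible_sextic_rat, ?_⟩
  simpa only [eval_sextic] using ncard_roots_sextic_real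
end
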